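/- Let Ω be a nonempty proper open subset of ℝⁿ and let ε,δ>0. Then: (i) if Ω is an (ε,δ)-domain with rad(Ω)>0, then Ω is locally an (ε,δ)-domain near ∂Ω; (ii) if Ω is locally an (ε,δ)-domain near ∂Ω, then there exists δ'>0 such that Ω is an (ε,δ')-domain. -/

import Mathlib

open MeasureTheory Set Filter Topology Metric
open scoped ENNReal NNReal

noncomputable section

abbrev Rn (n : ℕ) := EuclideanSpace ℝ (Fin n)

/-- First-order partial derivative in coordinate direction `i`. -/
def pderivI {n : ℕ} (i : Fin n) (f : Rn n → ℝ) : Rn n → ℝ :=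
  fun x => fderiv ℝ f x (EuclideanSpace.single i 1)

/-- Iterated partial derivative in direction `i`. -/
def pderivPow {n : ℕ} (i : Fin n) : ℕ → (Rn n → ℝ) → (Rn n → ℝ)
  | 0, f => f
  | m + 1, f => pderivI i (pderivPow i m f)

/-- Partial derivative `∂^α` for a multi-index `α`. -/
def pderivMulti {n : ℕ} (α : Fin n → ℕ) (f : Rn n → ℝ) : Rn n → ℝ :=
  (List.finRange n).foldr (fun i g => pderivPow i (α i) g) f

/-- The (finite) set of multi-indices of degree at most `k`. -/
def multiIdx (n k : ℕ) : Finset (Fin n → ℕ) :=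
  ((Finset.univ : Finset (Fin n → Fin (k + 1))).image fun f i => (f i : ℕ)).filter
    fun α => (∑ i, α i) ≤ k

/-- `v` is the `α`-th distributional (weak) derivative of `u` on the open set `O`. -/
def IsWeakDerivOn {n : ℕ} (O : Set (Rn n)) (α : Fin n → ℕ) (u v : Rn n → ℝ) : Prop :=
  ∀ φ : Rn n → ℝ, ContDiff ℝ (⊤ : ℕ∞) φ → HasCompactSupport φ → tsupport φ ⊆ O →
    ∫ x in O, u x * pderivMulti α φ x = (-1 : ℝ) ^ (∑ i, α i) * ∫ x in O, v x * φ x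

-- A choice of `α`-th weak derivative of `u` on `O` (junk value if none exists).
open Classical in
def wkDeriv {n : ℕ} (O : Set (Rn n)) (α : Fin n → ℕ) (u : Rn n → ℝ) : Rn n → ℝ :=
  if α = fun _ => 0 then u
  else if h : ∃ v : Rn n → ℝ, IsWeakDerivOn O α u v then h.choose else 0

/-- Membership in the Sobolev space `W^{k,p}(O)`. -/
def MemW {n : ℕ} (O : Set (Rn n)) (k : ℕ) (p : ℝ≥0∞) (u : Rn n → ℝ) : Prop :=
  LocallyIntegrableOn u O volume ∧
    ∀ α : Fin n → ℕ, (∑ i, α i) ≤ k →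
      ∃ v : Rn n → ℝ, IsWeakDerivOn O α u v ∧ MemLp v p (volume.restrict O)

/-- The Sobolev norm `‖u‖_{W^{k,p}(O)}`, as an extended real number. -/
def Wnorm {n : ℕ} (O : Set (Rn n)) (k : ℕ) (p : ℝ≥0∞) (u : Rn n → ℝ) : ℝ≥0∞ :=
  ∑ α ∈ multiIdx n k, eLpNorm (wkDeriv O α u) p (volume.restrict O)

/-- Membership in `W^{k,p}_D(O)`: the closure in `W^{k,p}(O)` of restrictions to `O` of
smooth compactly supported functions on `ℝⁿ` whose support is disjoint from `D`. -/
def MemWD {n : ℕ} (O D : Set (Rn n)) (k : ℕ) (p : ℝ≥0∞) (u : Rn n → ℝ) : Prop :=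
  MemW O k p u ∧
    ∀ ε : ℝ≥0∞, 0 < ε → ∃ φ : Rn n → ℝ, ContDiff ℝ (⊤ : ℕ∞) φ ∧ HasCompactSupport φ ∧
      Disjoint D (tsupport φ) ∧ Wnorm O k p (fun x => u x - φ x) < ε

/-- Membership in `W̊^{k,p}(O)`: the closure of `C_c^∞(O)` in `W^{k,p}(O)`. -/
def MemW0 {n : ℕ} (O : Set (Rn n)) (k : ℕ) (p : ℝ≥0∞) (u : Rn n → ℝ) : Prop :=
  MemW O k p u ∧
    ∀ ε : ℝ≥0∞, 0 < ε → ∃ φ : Rn n → ℝ, ContDiff ℝ (⊤ : ℕ∞) φ ∧ HasCompactSupport φ ∧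
      tsupport φ ⊆ O ∧ Wnorm O k p (fun x => u x - φ x) < ε

/-- `(ε,δ)`-domain in the sense of Jones. -/
def IsEpsDeltaDomain {n : ℕ} (ε : ℝ) (δ : ℝ≥0∞) (Ω : Set (Rn n)) : Prop :=
  IsOpen Ω ∧ Ω.Nonempty ∧ Ω ≠ univ ∧
    ∀ x ∈ Ω, ∀ y ∈ Ω, ENNReal.ofReal (dist x y) < δ →
      ∃ γ : ℝ → Rn n, ContinuousOn γ (Icc 0 1) ∧ γ 0 = x ∧ γ 1 = y ∧
        (∀ t ∈ Icc (0 : ℝ) 1, γ t ∈ Ω) ∧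
        eVariationOn γ (Icc 0 1) ≤ ENNReal.ofReal (ε⁻¹ * dist x y) ∧
        ∀ t ∈ Icc (0 : ℝ) 1,
          ε * dist (γ t) x * dist (γ t) y / dist x y ≤ infDist (γ t) (frontier Ω)

/-- `rad Ω`: infimum over connected components `C` of `Ω` of `inf_{x∈C} sup_{y∈C} |x-y|`. -/
def rad {n : ℕ} (Ω : Set (Rn n)) : ℝ≥0∞ :=
  ⨅ x ∈ Ω, ⨆ y ∈ connectedComponentIn Ω x, edist x y

/-- `Ω` is locally an `(ε,δ)`-domain near `N ⊆ ∂Ω`. -/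
def IsLocEpsDeltaDomainNear {n : ℕ} (ε : ℝ) (δ : ℝ≥0∞) (Ω N : Set (Rn n)) : Prop :=
  IsOpen Ω ∧ Ω.Nonempty ∧ Ω ≠ univ ∧ N ⊆ frontier Ω ∧
    ∃ (J : Set ℕ) (O : ℕ → Set (Rn n)) (κ : ℝ≥0∞), 0 < κ ∧
      (∀ j ∈ J, IsOpen (O j)) ∧
      (∀ x : Rn n, ∃ s ∈ 𝓝 x, {j | j ∈ J ∧ (O j ∩ s).Nonempty}.Finite) ∧
      (∃ L : ℕ, ∀ x : Rn n, {j | j ∈ J ∧ x ∈ O j}.encard ≤ L) ∧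
      (∀ j ∈ J, ∃ Ωj : Set (Rn n), IsEpsDeltaDomain ε δ Ωj ∧ κ < rad Ωj ∧
        O j ∩ Ω = O j ∩ Ωj) ∧
      (∃ r : ℝ≥0∞, 0 < r ∧ ∀ x ∈ N, ∃ j ∈ J, {y : Rn n | edist y x < r} ⊆ O j)

/-- Support of a measurable function relative to an open set `O`. -/
def msupp {n : ℕ} (O : Set (Rn n)) (v : Rn n → ℝ) : Set (Rn n) :=
  {x | x ∈ closure O ∧
    ¬ ∃ r : ℝ, 0 < r ∧ ∀ᵐ y ∂(volume.restrict (O ∩ Metric.ball x r)), v y = 0}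

/-- `d`-Ahlfors regularity of a set `S ⊆ ℝⁿ`. -/
def AhlforsRegular {n : ℕ} (d : ℝ) (S : Set (Rn n)) : Prop :=
  ∃ C : ℝ, 1 ≤ C ∧ ∀ x ∈ S, ∀ r : ℝ, 0 < r → ENNReal.ofReal r ≤ EMetric.diam S →
    ENNReal.ofReal (C⁻¹ * r ^ d) ≤ μH[d] (Metric.ball x r ∩ S) ∧
    μH[d] (Metric.ball x r ∩ S) ≤ ENNReal.ofReal (C * r ^ d)

/-- Linearity for an operator acting on real-valued functions. -/
def IsLinearMapFn {n : ℕ} (T : (Rn n → ℝ) → (Rn n → ℝ)) : Prop :=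
  (∀ u v : Rn n → ℝ, T (fun x => u x + v x) = fun x => T u x + T v x) ∧
  ∀ (c : ℝ) (u : Rn n → ℝ), T (fun x => c * u x) = fun x => c * T u x

/-- The averages of `v` over balls centered at `x` converge to `c` as the radius shrinks. -/
def traceTendsto {n : ℕ} (v : Rn n → ℝ) (x : Rn n) (c : ℝ) : Prop :=
  Tendsto (fun r : ℝ => ⨍ y in Metric.ball x r, v y ∂volume) (𝓝[>] 0) (𝓝 c)

/-!
Part (i) needs a single chart: `O = ℝⁿ` with `Ωⱼ = Ω`.

For part (ii), let `R > 0` be such that every ball of radius `R` centred on `∂Ω` lies in a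
chart `Oⱼ`, on which `Ω` and the `(ε,δ)`-domain `Ωⱼ` coincide, and hence so do their
boundaries. Any `(ε,δ)`-domain forces `0 < ε ≤ 1`, since a curve is at least as long as the
distance between its endpoints. Take `δ' = min δ (εR/8)` and `x, y ∈ Ω` with `|x - y| < δ'`.
If `x` is within `R/2` of `∂Ω`, the cigar curve of `Ωⱼ` joining `x` to `y` stays, together with
its `ε⁻¹|x - y|`-neighbourhood, inside a single chart, so it is a cigar curve for `Ω` as well.
Otherwise `x` is at distance at least `R/2 > 2|x - y|` from `∂Ω`, and the segment `[x, y]`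
is a cigar curve.
-/

open AffineMap

theorem frontier_inter_eq_of_inter_eq {X : Type*} [TopologicalSpace X] {U A B : Set X}
    (hU : IsOpen U) (h : U ∩ A = U ∩ B) : frontier A ∩ U = frontier B ∩ U := by
  rw [← frontier_inter_open_inter hU, ← frontier_inter_open_inter (s := B) hU,
    inter_comm A, inter_comm B, h]

theorem ball_infDist_frontier_subset {E : Type*} [NormedAddCommGroup E] [NormedSpace ℝ E]
    [FiniteDimensional ℝ E] {Ω : Set E} {x : E} (hx : x ∈ Ω) :
    ball x (infDist x (frontier Ω)) ⊆ Ω := by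
  rcases eq_or_ne Ω univ with rfl | hΩ
  · exact subset_univ _
  obtain ⟨y, hy, hxy⟩ := exists_mem_frontier_infDist_compl_eq_dist hx hΩ
  exact (ball_subset_ball (hxy ▸ infDist_le_dist_of_mem hy)).trans ball_infDist_compl_subset

theorem IsOpen.exists_ne_mem_edist_lt {E : Type*} [NormedAddCommGroup E] [NormedSpace ℝ E]
    [Nontrivial E] {Ω : Set E} (hΩ : IsOpen Ω) {x : E} (hx : x ∈ Ω) {r : ℝ≥0∞} (hr : 0 < r) :
    ∃ y ∈ Ω, y ≠ x ∧ edist x y < r := by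
  have hr' : ∀ᶠ y in 𝓝 x, edist x y < r :=
    Eventually.mono (eball_mem_nhds x hr) fun y hy => (edist_comm x y).trans_lt hy
  have hnear : ∀ᶠ y in 𝓝[≠] x, (y ∈ Ω ∧ edist x y < r) ∧ y ≠ x :=
    (eventually_nhdsWithin_of_eventually_nhds (Eventually.and (hΩ.mem_nhds hx) hr')).and
      self_mem_nhdsWithin
  obtain ⟨y, ⟨hyΩ, hyr⟩, hyx⟩ := hnear.exists
  exact ⟨y, hyΩ, hyx, hyr⟩

theorem dist_le_of_eVariationOn_le {α E : Type*} [LinearOrder α] [PseudoMetricSpace E]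
    {f : α → E} {s : Set α} {L : ℝ} (hL : 0 ≤ L) (h : eVariationOn f s ≤ ENNReal.ofReal L)
    {a b : α} (ha : a ∈ s) (hb : b ∈ s) : dist (f a) (f b) ≤ L := by
  rw [← ENNReal.ofReal_le_ofReal_iff hL, ← edist_dist]
  exact (eVariationOn.edist_le f ha hb).trans h

theorem LipschitzWith.eVariationOn_Icc_le {E : Type*} [PseudoEMetricSpace E] {f : ℝ → E}
    {K : ℝ≥0} (hf : LipschitzWith K f) (a b : ℝ) :
    eVariationOn f (Icc a b) ≤ K * ENNReal.ofReal (b - a) := by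
  have hid : eVariationOn id (Icc a b) ≤ ENNReal.ofReal (b - a) := by simp
  calc eVariationOn f (Icc a b) = eVariationOn (f ∘ id) (Icc a b) := rfl
    _ ≤ K * eVariationOn id (Icc a b) :=
      hf.lipschitzOnWith.comp_eVariationOn_le (mapsTo_univ _ _)
    _ ≤ K * ENNReal.ofReal (b - a) := by gcongr

theorem eVariationOn_lineMap_le {E : Type*} [NormedAddCommGroup E] [NormedSpace ℝ E]
    (x y : E) : eVariationOn (lineMap x y : ℝ → E) (Icc 0 1) ≤ edist x y := by
  have h := (lipschitzWith_lineMap (𝕜 := ℝ) x y).eVariationOn_Icc_le 0 1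
  rwa [sub_zero, ENNReal.ofReal_one, mul_one, ← edist_nndist] at h

theorem mul_dist_mul_dist_div_le {E : Type*} [PseudoMetricSpace E] {ε c : ℝ} (hε : 0 ≤ ε)
    {x y z : E} (hx : dist z x ≤ c * dist x y) (hy : dist z y ≤ c * dist x y) :
    ε * dist z x * dist z y / dist x y ≤ ε * c ^ 2 * dist x y := by
  rcases (dist_nonneg (x := x) (y := y)).eq_or_lt with h | h
  · simp [← h]
  rw [div_le_iff₀ h]
  calc ε * dist z x * dist z y = ε * (dist z x * dist z y) := by ring
    _ ≤ ε * (c * dist x y * (c * dist x y)) := by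
      gcongr ε * ?_
      exact mul_le_mul hx hy dist_nonneg (dist_nonneg.trans hx)
    _ = ε * c ^ 2 * dist x y * dist x y := by ring

section CigarCurve

variable {E : Type*} [MetricSpace E] {ε : ℝ} {Ω : Set E} {x y : E} {γ : ℝ → E}

/-- Jones's `ε`-cigar condition, as required of the curves in `IsEpsDeltaDomain`. -/
def IsCigarCurve (ε : ℝ) (Ω : Set E) (x y : E) (γ : ℝ → E) : Prop :=
  ContinuousOn γ (Icc 0 1) ∧ γ 0 = x ∧ γ 1 = y ∧ (∀ t ∈ Icc (0 : ℝ) 1, γ t ∈ Ω) ∧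
    eVariationOn γ (Icc 0 1) ≤ ENNReal.ofReal (ε⁻¹ * dist x y) ∧
    ∀ t ∈ Icc (0 : ℝ) 1, ε * dist (γ t) x * dist (γ t) y / dist x y ≤ infDist (γ t) (frontier Ω)

theorem IsCigarCurve.dist_left_le (hε : 0 < ε) (hγ : IsCigarCurve ε Ω x y γ) {t : ℝ}
    (ht : t ∈ Icc (0 : ℝ) 1) : dist (γ t) x ≤ ε⁻¹ * dist x y := by
  obtain ⟨-, h0, -, -, hvar, -⟩ := hγ
  have h := dist_le_of_eVariationOn_le (by positivity) hvar ht (left_mem_Icc.2 zero_le_one)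
  rwa [h0] at h

theorem IsCigarCurve.dist_right_le (hε : 0 < ε) (hγ : IsCigarCurve ε Ω x y γ) {t : ℝ}
    (ht : t ∈ Icc (0 : ℝ) 1) : dist (γ t) y ≤ ε⁻¹ * dist x y := by
  obtain ⟨-, -, h1, -, hvar, -⟩ := hγ
  have h := dist_le_of_eVariationOn_le (by positivity) hvar ht (right_mem_Icc.2 zero_le_one)
  rwa [h1] at h

theorem IsCigarCurve.of_inter_eq (hε : 0 < ε) {U Ω' : Set E} (hU : IsOpen U)
    (hUΩ : U ∩ Ω = U ∩ Ω') (hxU : closedBall x (2 * (ε⁻¹ * dist x y)) ⊆ U)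
    (hfr : (frontier Ω).Nonempty) (hγ : IsCigarCurve ε Ω' x y γ) : IsCigarCurve ε Ω x y γ := by
  have ⟨hcont, h0, h1, hγΩ', hvar, hγcigar⟩ := hγ
  have hnearU : ∀ t ∈ Icc (0 : ℝ) 1, ∀ z, dist z (γ t) ≤ ε⁻¹ * dist x y → z ∈ U :=
    fun t ht z hz => hxU <| mem_closedBall.2 <| by
      linarith [dist_triangle z (γ t) x, hγ.dist_left_le hε ht]
  have hmem : ∀ t ∈ Icc (0 : ℝ) 1, γ t ∈ Ω := fun t ht => by
    have h : γ t ∈ U ∩ Ω' := ⟨hnearU t ht _ (by rw [dist_self]; positivity), hγΩ' t ht⟩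
    exact (hUΩ ▸ h).2
  refine ⟨hcont, h0, h1, hmem, hvar, fun t ht => ?_⟩
  have hbound : ε * dist (γ t) x * dist (γ t) y / dist x y ≤ ε⁻¹ * dist x y := by
    have h := mul_dist_mul_dist_div_le hε.le (hγ.dist_left_le hε ht) (hγ.dist_right_le hε ht)
    rwa [show ε * ε⁻¹ ^ 2 = ε⁻¹ by field_simp] at h
  by_contra! hlt
  obtain ⟨w, hw, hγw⟩ := (infDist_lt_iff hfr).1 hlt
  have hwU : w ∈ U := hnearU t ht w (by rw [dist_comm]; linarith)
  have hw' : w ∈ frontier Ω' := by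
    have h : w ∈ frontier Ω ∩ U := ⟨hw, hwU⟩
    exact (frontier_inter_eq_of_inter_eq hU hUΩ ▸ h).1
  linarith [hγcigar t ht, infDist_le_dist_of_mem (x := γ t) hw']

end CigarCurve

theorem isCigarCurve_lineMap {E : Type*} [NormedAddCommGroup E] [NormedSpace ℝ E]
    [FiniteDimensional ℝ E] {ε : ℝ} (hε : 0 < ε) (hε1 : ε ≤ 1) {Ω : Set E} {x y : E}
    (hx : x ∈ Ω) (hxy : 2 * dist x y < infDist x (frontier Ω)) :
    IsCigarCurve ε Ω x y (lineMap x y) := by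
  have hdx : ∀ t ∈ Icc (0 : ℝ) 1, dist (lineMap x y t) x ≤ 1 * dist x y := fun t ht => by
    rw [dist_lineMap_left, Real.norm_of_nonneg ht.1]
    gcongr
    exact ht.2
  have hdy : ∀ t ∈ Icc (0 : ℝ) 1, dist (lineMap x y t) y ≤ 1 * dist x y := fun t ht => by
    rw [dist_lineMap_right, Real.norm_of_nonneg (sub_nonneg.2 ht.2)]
    gcongr
    linarith [ht.1]
  refine ⟨lineMap_continuous.continuousOn, lineMap_apply_zero x y, lineMap_apply_one x y,
    fun t ht => ball_infDist_frontier_subset hx ?_, ?_, fun t ht => ?_⟩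
  · rw [mem_ball]
    linarith [hdx t ht, dist_nonneg (x := x) (y := y)]
  · refine (eVariationOn_lineMap_le x y).trans ?_
    rw [edist_dist]
    exact ENNReal.ofReal_le_ofReal <|
      le_mul_of_one_le_left dist_nonneg (one_le_inv_iff₀.2 ⟨hε, hε1⟩)
  · calc ε * dist (lineMap x y t) x * dist (lineMap x y t) y / dist x y
        ≤ ε * 1 ^ 2 * dist x y := mul_dist_mul_dist_div_le hε.le (hdx t ht) (hdy t ht)
      _ ≤ infDist x (frontier Ω) - dist x (lineMap x y t) := by
        rw [dist_comm x (lineMap x y t), one_pow, mul_one]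
        linarith [hdx t ht, mul_le_of_le_one_left (dist_nonneg (x := x) (y := y)) hε1]
      _ ≤ infDist (lineMap x y t) (frontier Ω) := by
        linarith [infDist_le_infDist_add_dist (s := frontier Ω) (x := x) (y := lineMap x y t)]

section EpsDeltaDomain

variable {n : ℕ} {ε : ℝ} {δ : ℝ≥0∞} {Ω : Set (Rn n)}

theorem IsEpsDeltaDomain.pos_and_le_one (h : IsEpsDeltaDomain ε δ Ω) (hδ : 0 < δ) :
    0 < ε ∧ ε ≤ 1 := by
  obtain ⟨hΩ, ⟨x, hx⟩, hne, hcurve⟩ := h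
  obtain ⟨z, hz⟩ := (ne_univ_iff_exists_notMem Ω).1 hne
  have : Nontrivial (Rn n) := nontrivial_of_ne x z (ne_of_mem_of_not_mem hx hz)
  obtain ⟨y, hy, hyx, hxy⟩ := hΩ.exists_ne_mem_edist_lt hx hδ
  rw [edist_dist] at hxy
  obtain ⟨γ, -, hγ0, hγ1, -, hvar, -⟩ := hcurve x hx y hy hxy
  have hlen : edist x y ≤ ENNReal.ofReal (ε⁻¹ * dist x y) :=
    calc edist x y = edist (γ 0) (γ 1) := by rw [hγ0, hγ1]
      _ ≤ eVariationOn γ (Icc 0 1) :=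
        eVariationOn.edist_le γ (left_mem_Icc.2 zero_le_one) (right_mem_Icc.2 zero_le_one)
      _ ≤ _ := hvar
  have hpos : 0 < dist x y := dist_pos.2 hyx.symm
  rw [edist_dist, ENNReal.ofReal_le_ofReal_iff', or_iff_left hpos.not_ge] at hlen
  exact one_le_inv_iff₀.1 (le_of_mul_le_mul_right (by linarith) hpos)

theorem IsEpsDeltaDomain.isLocEpsDeltaDomainNear (h : IsEpsDeltaDomain ε δ Ω)
    (hrad : 0 < rad Ω) {N : Set (Rn n)} (hN : N ⊆ frontier Ω) :
    IsLocEpsDeltaDomainNear ε δ Ω N := by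
  obtain ⟨κ, hκ0, hκlt⟩ := exists_between hrad
  refine ⟨h.1, h.2.1, h.2.2.1, hN, {0}, fun _ => univ, κ, hκ0, fun _ _ => isOpen_univ,
    fun _ => ⟨univ, univ_mem, (finite_singleton 0).subset fun _ hj => hj.1⟩,
    ⟨1, fun _ => ?_⟩, fun _ _ => ⟨Ω, h, hκlt, rfl⟩,
    ⟨1, one_pos, fun _ _ => ⟨0, rfl, subset_univ _⟩⟩⟩
  calc {j | j ∈ ({0} : Set ℕ) ∧ _ ∈ univ}.encard ≤ ({0} : Set ℕ).encard :=
        encard_le_encard fun _ hj => hj.1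
    _ = (1 : ℕ) := by simp

theorem IsLocEpsDeltaDomainNear.exists_chart_ball {N : Set (Rn n)}
    (h : IsLocEpsDeltaDomainNear ε δ Ω N) :
    ∃ R : ℝ, 0 < R ∧ ∀ p ∈ N, ∃ U Ω' : Set (Rn n), IsOpen U ∧ ball p R ⊆ U ∧
      U ∩ Ω = U ∩ Ω' ∧ IsEpsDeltaDomain ε δ Ω' := by
  obtain ⟨-, -, -, -, J, O, κ, -, hO, -, -, hΩJ, r, hr, hcov⟩ := h
  obtain ⟨R, -, hR, hRr⟩ := ENNReal.lt_iff_exists_real_btwn.1 hr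
  rw [ENNReal.ofReal_pos] at hR
  refine ⟨R, hR, fun p hp => ?_⟩
  obtain ⟨j, hj, hpj⟩ := hcov p hp
  obtain ⟨Ω', hΩ', -, hOj⟩ := hΩJ j hj
  refine ⟨O j, Ω', hO j hj, fun z hz => hpj ?_, hOj, hΩ'⟩
  show edist z p < r
  rw [edist_dist]
  exact ((ENNReal.ofReal_lt_ofReal_iff hR).2 (mem_ball.1 hz)).trans hRr

theorem IsLocEpsDeltaDomainNear.exists_isEpsDeltaDomain (hδ : 0 < δ)
    (h : IsLocEpsDeltaDomainNear ε δ Ω (frontier Ω)) :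
    ∃ δ' : ℝ≥0∞, 0 < δ' ∧ IsEpsDeltaDomain ε δ' Ω := by
  obtain ⟨R, hR, hchart⟩ := h.exists_chart_ball
  obtain ⟨hΩ, hne, hproper, -⟩ := h
  have hfr : (frontier Ω).Nonempty := nonempty_frontier_iff.2 ⟨hne, hproper⟩
  obtain ⟨hε, hε1⟩ : 0 < ε ∧ ε ≤ 1 := by
    obtain ⟨p, hp⟩ := hfr
    obtain ⟨-, Ω', -, -, -, hΩ'⟩ := hchart p hp
    exact hΩ'.pos_and_le_one hδ
  refine ⟨min δ (ENNReal.ofReal (ε * R / 8)), lt_min hδ (by simp; positivity),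
    hΩ, hne, hproper, fun x hx y hy hxy => ?_⟩
  have hd : dist x y < ε * R / 8 :=
    (ENNReal.ofReal_lt_ofReal_iff (by positivity)).1 (hxy.trans_le (min_le_right _ _))
  have hεR : ε * R ≤ R := mul_le_of_le_one_left hR.le hε1
  have hd' : ε⁻¹ * dist x y < R / 8 := by
    rw [inv_mul_lt_iff₀ hε]
    linarith
  have hd_le : dist x y ≤ ε⁻¹ * dist x y :=
    le_mul_of_one_le_left dist_nonneg (one_le_inv_iff₀.2 ⟨hε, hε1⟩)
  rcases lt_or_ge (infDist x (frontier Ω)) (R / 2) with hnear | hfar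
  · obtain ⟨p, hp, hxp⟩ := (infDist_lt_iff hfr).1 hnear
    obtain ⟨U, Ω', hU, hpU, hUΩ, hΩ'⟩ := hchart p hp
    have hsub : closedBall x (2 * (ε⁻¹ * dist x y)) ⊆ U := fun z hz => hpU <| mem_ball.2 <| by
      linarith [dist_triangle z x p, mem_closedBall.1 hz]
    have hmem : ∀ z ∈ Ω, z ∈ closedBall x (2 * (ε⁻¹ * dist x y)) → z ∈ Ω' := fun z hz hzx => by
      have h : z ∈ U ∩ Ω := ⟨hsub hzx, hz⟩
      exact (hUΩ ▸ h).2
    obtain ⟨γ, hγ⟩ := hΩ'.2.2.2 x (hmem x hx (mem_closedBall_self (by positivity)))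
      y (hmem y hy (mem_closedBall.2 (by rw [dist_comm]; linarith [dist_nonneg (x := x) (y := y)])))
      (hxy.trans_le (min_le_left _ _))
    exact ⟨γ, IsCigarCurve.of_inter_eq hε hU hUΩ hsub hfr hγ⟩
  · exact ⟨lineMap x y, isCigarCurve_lineMap hε hε1 hx (by linarith)⟩

end EpsDeltaDomain

theorem stmt3_general (n : ℕ) (ε : ℝ) (δ : ℝ≥0∞) (hδ : 0 < δ)
    (Ω : Set (Rn n)) :
    (IsEpsDeltaDomain ε δ Ω ∧ 0 < rad Ω →
      IsLocEpsDeltaDomainNear ε δ Ω (frontier Ω)) ∧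
    (IsLocEpsDeltaDomainNear ε δ Ω (frontier Ω) →
      ∃ δ' : ℝ≥0∞, 0 < δ' ∧ IsEpsDeltaDomain ε δ' Ω) :=
  ⟨fun ⟨h, hrad⟩ => h.isLocEpsDeltaDomainNear hrad subset_rfl,
    fun h => h.exists_isEpsDeltaDomain hδ⟩

/-- Relation between `(ε,δ)`-domains and locally `(ε,δ)`-domains near the
full topological boundary. -/
theorem stmt3 (n : ℕ) (ε : ℝ) (δ : ℝ≥0∞) (hε : 0 < ε) (hδ : 0 < δ)
    (Ω : Set (Rn n)) (hopen : IsOpen Ω) (hne : Ω.Nonempty) (hproper : Ω ≠ univ) :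
    (IsEpsDeltaDomain ε δ Ω ∧ 0 < rad Ω →
      IsLocEpsDeltaDomainNear ε δ Ω (frontier Ω)) ∧
    (IsLocEpsDeltaDomainNear ε δ Ω (frontier Ω) →
      ∃ δ' : ℝ≥0∞, 0 < δ' ∧ IsEpsDeltaDomain ε δ' Ω) :=
  stmt3_general n ε δ hδ Ω
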